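/- arXiv:1805.12119 — 4 statements merged into one kernel-verified Lean document; each statement's English description precedes it below -/
import Mathlib

section
/- A finite group G is a non-cyclic group of prime exponent if and only if its power graph 𝒢(G) is non-complete and minimally edge-connected. -/
open Subgroup

/-- The power graph of a group: distinct `u`, `v` are adjacent iff one is a
positive integer power of the other. -/
def powerGraph (G : Type*) [Group G] : SimpleGraph G where
  Adj u v := u ≠ v ∧ ((∃ n : ℕ, 0 < n ∧ v = u ^ n) ∨ (∃ m : ℕ, 0 < m ∧ u = v ^ m))
  symm := ⟨fun u v h => ⟨h.1.symm, h.2.symm⟩⟩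
  loopless := ⟨fun u h => h.1 rfl⟩

/-- The degree of a vertex in a graph. -/
noncomputable def gDegree {V : Type*} (Γ : SimpleGraph V) (x : V) : ℕ :=
  (Γ.neighborSet x).ncard

/-- The minimum degree δ(Γ) of a graph. -/
noncomputable def gMinDegree {V : Type*} (Γ : SimpleGraph V) : ℕ :=
  sInf (Set.range (gDegree Γ))

/-- The edge-connectivity κ'(Γ): the least size of a set of edges whose deletion
disconnects the graph. -/
noncomputable def edgeConn {V : Type*} (Γ : SimpleGraph V) : ℕ :=
  sInf {k | ∃ s : Finset (Sym2 V), s.card = k ∧ ↑s ⊆ Γ.edgeSet ∧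
    ¬ (Γ.deleteEdges ↑s).Connected}

/-- The vertex connectivity κ(Γ): the least size of a set of vertices whose deletion
disconnects the graph or leaves at most one vertex. -/
noncomputable def vertConn {V : Type*} (Γ : SimpleGraph V) : ℕ :=
  sInf {k | ∃ S : Set V, S.Finite ∧ S.ncard = k ∧
    (¬ (Γ.induce Sᶜ).Preconnected ∨ Sᶜ.Subsingleton)}

/-- A nontrivial connected graph is minimally edge-connected if deleting any edge
drops the edge-connectivity by exactly one. -/
def MinimallyEdgeConnected {V : Type*} (Γ : SimpleGraph V) : Prop :=
  Nontrivial V ∧ Γ.Connected ∧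
    ∀ e ∈ Γ.edgeSet, edgeConn (Γ.deleteEdges {e}) = edgeConn Γ - 1

/-- A nontrivial connected graph is minimally connected if deleting any edge
drops the vertex connectivity by exactly one. -/
def MinimallyConnected {V : Type*} (Γ : SimpleGraph V) : Prop :=
  Nontrivial V ∧ Γ.Connected ∧
    ∀ e ∈ Γ.edgeSet, vertConn (Γ.deleteEdges {e}) = vertConn Γ - 1

/-- `S` is a separating set of `Γ` if deleting the vertices of `S` leaves a
disconnected graph. -/
def IsSeparatingSet {V : Type*} (Γ : SimpleGraph V) (S : Set V) : Prop :=
  ¬ (Γ.induce Sᶜ).Preconnected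

/-- `S` is a minimum separating set of `Γ`. -/
def IsMinSeparatingSet {V : Type*} (Γ : SimpleGraph V) (S : Set V) : Prop :=
  IsSeparatingSet Γ S ∧ ∀ T : Set V, IsSeparatingSet Γ T → S.ncard ≤ T.ncard

/-- `y` generates a maximal cyclic subgroup of `G`: the cyclic subgroup `⟨y⟩` is
not properly contained in any cyclic subgroup. -/
def IsMaxCyclicGen {G : Type*} [Group G] (y : G) : Prop :=
  ∀ z : G, zpowers y ≤ zpowers z → zpowers y = zpowers z

/-- A subgroup is maximal cyclic if it is cyclic and not properly contained in
any cyclic subgroup. -/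
def IsMaximalCyclicSubgroup {G : Type*} [Group G] (H : Subgroup G) : Prop :=
  (∃ y : G, H = zpowers y) ∧ ∀ z : G, H ≤ zpowers z → H = zpowers z

/-!
The identity is adjacent to every other vertex of the power graph `Γ`, and a vertex `v` cut off
from a universal vertex by an edge cut `F` owns `deg v` edges of `F`. Hence `κ'(Γ) = δ(Γ)`, and if
`Γ` is minimally edge-connected, all non-identity elements have the same degree `k`.

For prime exponent `p`, `Γ` is `1` joined to disjoint cliques of size `p - 1`; so `κ'(Γ) = p - 1`,
and deleting an edge leaves an endpoint of degree `p - 2`.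

Conversely, if all `x ≠ 1` have degree `k`, every maximal cyclic subgroup has order `k + 1`, since
its generators are adjacent exactly to its other elements. Counting, for `x` of prime order, the
elements having `x` as a power shows that `k + 1 = p ^ a` is a prime power, and `a = 1` because
otherwise a central element of order `p` would merge two maximal cyclic subgroups. So `k + 1` is
prime, and it is the exponent of `G`.
-/

section EdgeConnectivity

variable {V : Type*} {Γ : SimpleGraph V}

lemma connected_of_forall_adj {u : V} (hu : ∀ w, w ≠ u → Γ.Adj u w) : Γ.Connected :=
  (SimpleGraph.connected_iff_exists_forall_reachable Γ).2
    ⟨u, fun w => by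
      rcases eq_or_ne w u with rfl | h
      exacts [.refl w, (hu w h).reachable]⟩

lemma edgeConn_le_card {s : Finset (Sym2 V)} (hs : ↑s ⊆ Γ.edgeSet)
    (hdis : ¬ (Γ.deleteEdges ↑s).Connected) : edgeConn Γ ≤ s.card :=
  Nat.sInf_le ⟨s, rfl, hs, hdis⟩

lemma exists_edge_cut_of_gDegree [Finite V] [Nontrivial V] (Γ : SimpleGraph V) (x : V) :
    ∃ s : Finset (Sym2 V), s.card = gDegree Γ x ∧ ↑s ⊆ Γ.edgeSet ∧
      ¬ (Γ.deleteEdges ↑s).Connected := by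
  classical
  have hN := (Γ.neighborSet x).toFinite
  refine ⟨hN.toFinset.image (fun w => s(x, w)), ?_, ?_, ?_⟩
  · rw [Finset.card_image_of_injective _ fun _ _ h => Sym2.congr_right.1 h, gDegree,
      Set.ncard_eq_toFinset_card _ hN]
  · intro e he
    obtain ⟨w, hw, rfl⟩ := Finset.mem_image.1 he
    exact (hN.mem_toFinset.1 hw)
  · obtain ⟨y, hyx⟩ := exists_ne x
    intro hconn
    obtain ⟨walk⟩ := hconn.preconnected x y
    cases walk with
    | nil => exact hyx rfl
    | cons hadj _ =>
      rw [SimpleGraph.deleteEdges_adj] at hadj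
      exact hadj.2 (Finset.mem_image.2 ⟨_, hN.mem_toFinset.2 hadj.1, rfl⟩)

lemma edgeConn_le_gDegree [Finite V] [Nontrivial V] (Γ : SimpleGraph V) (x : V) :
    edgeConn Γ ≤ gDegree Γ x := by
  obtain ⟨s, hcard, hs, hdis⟩ := exists_edge_cut_of_gDegree Γ x
  exact hcard ▸ edgeConn_le_card hs hdis

lemma exists_edge_cut_card_eq_edgeConn [Finite V] [Nontrivial V] (Γ : SimpleGraph V) :
    ∃ s : Finset (Sym2 V), s.card = edgeConn Γ ∧ ↑s ⊆ Γ.edgeSet ∧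
      ¬ (Γ.deleteEdges ↑s).Connected := by
  obtain ⟨x⟩ := ‹Nontrivial V›.to_nonempty
  obtain ⟨s, -, hs⟩ := exists_edge_cut_of_gDegree Γ x
  exact Nat.sInf_mem (s := {k | ∃ s : Finset (Sym2 V), s.card = k ∧ ↑s ⊆ Γ.edgeSet ∧
    ¬ (Γ.deleteEdges ↑s).Connected}) ⟨s.card, s, rfl, hs⟩

lemma edgeConn_le_edgeConn_deleteEdges_add_one [Finite V] [Nontrivial V] {e : Sym2 V}
    (he : e ∈ Γ.edgeSet) : edgeConn Γ ≤ edgeConn (Γ.deleteEdges {e}) + 1 := by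
  classical
  obtain ⟨s, hcard, hs, hdis⟩ := exists_edge_cut_card_eq_edgeConn (Γ.deleteEdges {e})
  have hsub : ↑(insert e s) ⊆ Γ.edgeSet := by
    rw [Finset.coe_insert]
    exact Set.insert_subset he fun f hf => ((Γ.edgeSet_deleteEdges {e}) ▸ hs hf).1
  have hdis' : ¬ (Γ.deleteEdges ↑(insert e s)).Connected := by
    rwa [Finset.coe_insert, Set.insert_eq, ← SimpleGraph.deleteEdges_deleteEdges]
  calc edgeConn Γ ≤ (insert e s).card := edgeConn_le_card hsub hdis'
    _ ≤ s.card + 1 := Finset.card_insert_le _ _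
    _ = _ := by rw [hcard]

lemma gDegree_deleteEdges_of_adj [Finite V] {a b : V} (h : Γ.Adj a b) :
    gDegree (Γ.deleteEdges {s(a, b)}) a = gDegree Γ a - 1 := by
  have hN : (Γ.deleteEdges {s(a, b)}).neighborSet a = Γ.neighborSet a \ {b} := by
    ext w
    simp only [SimpleGraph.mem_neighborSet, SimpleGraph.deleteEdges_adj, Set.mem_singleton_iff,
      Set.mem_sdiff, Sym2.congr_right]
  rw [gDegree, gDegree, hN, Set.ncard_sdiff_singleton_of_mem (s := Γ.neighborSet a) h]

lemma mem_of_reachable_of_not_reachable {F : Set (Sym2 V)} {u a b : V} (hab : Γ.Adj a b)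
    (ha : (Γ.deleteEdges F).Reachable u a) (hb : ¬ (Γ.deleteEdges F).Reachable u b) :
    s(a, b) ∈ F := by
  by_contra hF
  exact hb (ha.trans (SimpleGraph.deleteEdges_adj.2 ⟨hab, hF⟩).reachable)

/-- The counting behind Plesník's theorem `κ' = δ` for graphs with a universal vertex `u`: a
vertex `v` on the far side `D` of a cut `F` owns, for each neighbour `w`, the cut edge `vw` if
`w ∉ D` and `wu` if `w ∈ D`. -/
lemma gDegree_le_card_of_forall_mem {u : V} (hu : ∀ w, w ≠ u → Γ.Adj u w) {D : Set V}
    (huD : u ∉ D) {F : Finset (Sym2 V)} (hF : ∀ a ∈ D, ∀ b ∉ D, Γ.Adj a b → s(a, b) ∈ F)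
    {v : V} (hv : v ∈ D) : gDegree Γ v ≤ F.card := by
  classical
  let f : V → Sym2 V := fun w => if w ∈ D then s(w, u) else s(v, w)
  rw [gDegree, ← Set.ncard_coe_finset F]
  refine Set.ncard_le_ncard_of_injOn f (fun w hw => ?_) (fun w hw w' hw' hww' => ?_) F.finite_toSet
  · by_cases hwD : w ∈ D
    · simpa [f, hwD] using hF w hwD u huD (hu w (ne_of_mem_of_not_mem hwD huD)).symm
    · simpa [f, hwD] using hF v hv w hwD hw
  · have hvu : v ≠ u := ne_of_mem_of_not_mem hv huD
    have hwv : w ≠ v := fun h => Γ.loopless.irrefl v (h ▸ hw)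
    have hw'v : w' ≠ v := fun h => Γ.loopless.irrefl v (h ▸ hw')
    simp only [f] at hww'
    split_ifs at hww' <;> aesop

lemma gDegree_le_card_of_not_reachable {u : V} (hu : ∀ w, w ≠ u → Γ.Adj u w)
    (F : Finset (Sym2 V)) {v : V} (hv : ¬ (Γ.deleteEdges ↑F).Reachable u v) :
    gDegree Γ v ≤ F.card :=
  gDegree_le_card_of_forall_mem hu (D := {w | ¬ (Γ.deleteEdges ↑F).Reachable u w})
    (fun h => h (.refl u)) (fun a ha b hb hab => by
      simpa [Sym2.eq_swap] using mem_of_reachable_of_not_reachable hab.symm (not_not.1 hb) ha) hv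

lemma le_edgeConn_of_forall_le_gDegree [Finite V] [Nontrivial V] {u : V}
    (hu : ∀ w, w ≠ u → Γ.Adj u w) {k : ℕ} (hk : ∀ v, v ≠ u → k ≤ gDegree Γ v) :
    k ≤ edgeConn Γ := by
  obtain ⟨s, hcard, -, hdis⟩ := exists_edge_cut_card_eq_edgeConn Γ
  obtain ⟨v, hv⟩ : ∃ v, ¬ (Γ.deleteEdges ↑s).Reachable u v := by
    by_contra! h
    exact hdis ((SimpleGraph.connected_iff_exists_forall_reachable _).2 ⟨u, h⟩)
  have hvu : v ≠ u := fun h => hv (by rw [h])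
  exact hcard ▸ (hk v hvu).trans (gDegree_le_card_of_not_reachable hu s hv)

/-- In a minimally edge-connected graph with a universal vertex `u`, every other vertex has
degree `κ'`: the edge `uv` together with a minimum cut of `Γ - uv` disconnects `Γ`, and `v` must
lie on the far side of it. -/
theorem gDegree_eq_edgeConn_of_minimallyEdgeConnected [Finite V]
    (hΓ : MinimallyEdgeConnected Γ) {u : V} (hu : ∀ w, w ≠ u → Γ.Adj u w) {v : V} (hvu : v ≠ u) :
    gDegree Γ v = edgeConn Γ := by
  classical
  have : Nontrivial V := hΓ.1
  have hpos : 1 ≤ edgeConn Γ :=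
    le_edgeConn_of_forall_le_gDegree hu fun w hw =>
      (Set.ncard_pos (Set.toFinite _)).2 ⟨u, (hu w hw).symm⟩
  set e : Sym2 V := s(u, v)
  have hdrop := hΓ.2.2 e (hu v hvu)
  obtain ⟨S, hcard, -, hdis⟩ := exists_edge_cut_card_eq_edgeConn (Γ.deleteEdges {e})
  set D := {w | ¬ (Γ.deleteEdges ↑(insert e S)).Reachable u w}
  have huD : u ∉ D := fun h => h (.refl u)
  have hcross : ∀ a ∈ D, ∀ c ∉ D, Γ.Adj a c → s(a, c) ∈ insert e S := fun a ha c hc hac => by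
    simpa [Sym2.eq_swap] using mem_of_reachable_of_not_reachable hac.symm (not_not.1 hc) ha
  obtain ⟨b, hb⟩ : ∃ b, b ∈ D := by
    by_contra! h
    refine hdis ((SimpleGraph.connected_iff_exists_forall_reachable _).2 ⟨u, fun w => ?_⟩)
    rw [SimpleGraph.deleteEdges_deleteEdges, ← Set.insert_eq, ← Finset.coe_insert]
    exact not_not.1 (h w)
  refine le_antisymm ?_ (edgeConn_le_gDegree Γ v)
  by_cases hv : v ∈ D
  · calc gDegree Γ v ≤ (insert e S).card := gDegree_le_card_of_forall_mem hu huD hcross hv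
      _ ≤ S.card + 1 := Finset.card_insert_le _ _
      _ = edgeConn Γ := by omega
  · -- the cut edges leaving `D` then avoid `uv`, so `S` alone separates `b` from `u`
    have hbS : gDegree Γ b ≤ S.card := by
      refine gDegree_le_card_of_forall_mem hu huD (fun a ha c hc hac => ?_) hb
      refine (Finset.mem_insert.1 (hcross a ha c hc hac)).resolve_left fun hae => ?_
      rcases Sym2.eq_iff.1 hae with ⟨rfl, -⟩ | ⟨rfl, -⟩
      exacts [huD ha, hv ha]
    have := edgeConn_le_gDegree Γ b
    omega

end EdgeConnectivity

section CyclicSubgroups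

variable {G : Type*} [Group G]

lemma ncard_zpowers (g : G) : (zpowers g : Set G).ncard = orderOf g := by
  rw [← Nat.card_coe_set_eq, SetLike.coe_sort_coe, Nat.card_zpowers]

variable [Finite G]

lemma mem_zpowers_pow_of_pow_eq_one {g x : G} {d : ℕ} (hd : d ∣ orderOf g)
    (hx : x ∈ zpowers g) (hxd : x ^ d = 1) : x ∈ zpowers (g ^ (orderOf g / d)) := by
  obtain ⟨k, rfl⟩ := (mem_powers_iff_mem_zpowers.2 hx : x ∈ Submonoid.powers g)
  have hd0 : 0 < d := Nat.pos_of_dvd_of_pos hd (orderOf_pos g)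
  obtain ⟨j, rfl⟩ : orderOf g / d ∣ k := by
    refine Nat.dvd_of_mul_dvd_mul_right hd0 ?_
    rw [Nat.div_mul_cancel hd]
    exact orderOf_dvd_of_pow_eq_one (by rwa [← pow_mul] at hxd)
  exact ⟨j, by simp [pow_mul]⟩

lemma mem_zpowers_of_orderOf_dvd {g x y : G} (hx : x ∈ zpowers g) (hy : y ∈ zpowers g)
    (hxy : orderOf x ∣ orderOf y) : x ∈ zpowers y := by
  have hyg : orderOf y ∣ orderOf g := orderOf_dvd_of_mem_zpowers hy
  have hK : zpowers y = zpowers (g ^ (orderOf g / orderOf y)) := by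
    refine eq_of_le_of_card_ge
      (zpowers_le.2 (mem_zpowers_pow_of_pow_eq_one hyg hy (pow_orderOf_eq_one y))) ?_
    rw [Nat.card_zpowers, Nat.card_zpowers, orderOf_pow_orderOf_div (orderOf_pos g).ne' hyg]
  rw [hK]
  exact mem_zpowers_pow_of_pow_eq_one hyg hx (orderOf_dvd_iff_pow_eq_one.1 hxy)

lemma mem_zpowers_or_mem_zpowers_of_orderOf_eq_prime_pow {g x y : G} {p a : ℕ} (hp : p.Prime)
    (hg : orderOf g = p ^ a) (hx : x ∈ zpowers g) (hy : y ∈ zpowers g) :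
    x ∈ zpowers y ∨ y ∈ zpowers x := by
  obtain ⟨i, -, hi⟩ := (Nat.dvd_prime_pow hp).1 (hg ▸ orderOf_dvd_of_mem_zpowers hx)
  obtain ⟨j, -, hj⟩ := (Nat.dvd_prime_pow hp).1 (hg ▸ orderOf_dvd_of_mem_zpowers hy)
  rcases le_total i j with hij | hji
  · exact .inl (mem_zpowers_of_orderOf_dvd hx hy (hi ▸ hj ▸ pow_dvd_pow p hij))
  · exact .inr (mem_zpowers_of_orderOf_dvd hy hx (hi ▸ hj ▸ pow_dvd_pow p hji))

lemma exists_isMaxCyclicGen (x : G) : ∃ z, x ∈ zpowers z ∧ IsMaxCyclicGen z := by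
  obtain ⟨z, hxz, hmax⟩ := Set.exists_max_image {z : G | x ∈ zpowers z} orderOf
    (Set.toFinite _) ⟨x, mem_zpowers x⟩
  refine ⟨z, hxz, fun w hzw => eq_of_le_of_card_ge hzw ?_⟩
  rw [Nat.card_zpowers, Nat.card_zpowers]
  exact hmax w (hzw hxz)

end CyclicSubgroups

lemma IsPGroup.exists_mem_center_orderOf_eq {G : Type*} [Group G] [Finite G] [Nontrivial G]
    {p : ℕ} [Fact p.Prime] (hG : IsPGroup p G) : ∃ z ∈ center G, orderOf z = p := by
  have := hG.center_nontrivial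
  obtain ⟨⟨z, hz⟩, hz1⟩ := exists_ne (1 : center G)
  have hz1' : z ≠ 1 := fun h => hz1 (Subtype.ext h)
  exact ⟨z ^ (orderOf z / p), pow_mem hz _,
    orderOf_pow_orderOf_div (orderOf_pos z).ne' (hG.dvd_orderOf hz1')⟩

section PowerGraph

variable {G : Type*} [Group G] [Finite G]

lemma exists_pos_pow_eq_of_mem_zpowers {g x : G} (hx : x ∈ zpowers g) :
    ∃ n : ℕ, 0 < n ∧ x = g ^ n := by
  obtain ⟨n, rfl⟩ := (mem_powers_iff_mem_zpowers.2 hx : x ∈ Submonoid.powers g)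
  rcases Nat.eq_zero_or_pos n with rfl | hn
  · exact ⟨orderOf g, orderOf_pos g, by simp [pow_orderOf_eq_one]⟩
  · exact ⟨n, hn, rfl⟩

lemma powerGraph_adj_iff {x y : G} :
    (powerGraph G).Adj x y ↔ x ≠ y ∧ (x ∈ zpowers y ∨ y ∈ zpowers x) := by
  refine and_congr_right fun _ => ⟨?_, ?_⟩
  · rintro (⟨n, -, rfl⟩ | ⟨n, -, rfl⟩)
    exacts [.inr (npow_mem_zpowers x n), .inl (npow_mem_zpowers y n)]
  · rintro (h | h)
    exacts [.inr (exists_pos_pow_eq_of_mem_zpowers h), .inl (exists_pos_pow_eq_of_mem_zpowers h)]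

lemma powerGraph_adj_one {x : G} (hx : x ≠ 1) : (powerGraph G).Adj 1 x :=
  powerGraph_adj_iff.2 ⟨hx.symm, .inl (one_mem _)⟩

lemma powerGraph_eq_top_of_orderOf_eq_prime_pow {g : G} {p a : ℕ} (hp : p.Prime)
    (hG : ∀ x, x ∈ zpowers g) (hg : orderOf g = p ^ a) : powerGraph G = ⊤ := by
  ext x y
  exact ⟨fun h => h.ne, fun hxy => powerGraph_adj_iff.2
    ⟨hxy, mem_zpowers_or_mem_zpowers_of_orderOf_eq_prime_pow hp hg (hG x) (hG y)⟩⟩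

lemma neighborSet_of_isMaxCyclicGen {y : G} (hy : IsMaxCyclicGen y) :
    (powerGraph G).neighborSet y = (zpowers y : Set G) \ {y} := by
  ext x
  simp only [SimpleGraph.mem_neighborSet, powerGraph_adj_iff, Set.mem_sdiff, SetLike.mem_coe,
    Set.mem_singleton_iff]
  constructor
  · rintro ⟨hne, h | h⟩
    · exact ⟨hy x (zpowers_le.2 h) ▸ mem_zpowers x, hne.symm⟩
    · exact ⟨h, hne.symm⟩
  · rintro ⟨h, hne⟩
    exact ⟨Ne.symm hne, .inr h⟩

lemma gDegree_of_isMaxCyclicGen {y : G} (hy : IsMaxCyclicGen y) :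
    gDegree (powerGraph G) y = orderOf y - 1 := by
  rw [gDegree, neighborSet_of_isMaxCyclicGen hy,
    Set.ncard_sdiff_singleton_of_mem (SetLike.mem_coe.2 (mem_zpowers y)), ncard_zpowers]

lemma gDegree_eq_ncard_of_orderOf_prime {x : G} (hx : (orderOf x).Prime) :
    gDegree (powerGraph G) x = {w | x ∈ zpowers w}.ncard := by
  have hx1 : x ≠ 1 := fun h => hx.one_lt.ne' (orderOf_eq_one_iff.2 h)
  have hN : (powerGraph G).neighborSet x = insert 1 ({w | x ∈ zpowers w} \ {x}) := by
    ext w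
    simp only [SimpleGraph.mem_neighborSet, powerGraph_adj_iff, Set.mem_insert_iff,
      Set.mem_sdiff, Set.mem_ofPred_eq, Set.mem_singleton_iff]
    constructor
    · rintro ⟨hne, h | h⟩
      · exact .inr ⟨h, hne.symm⟩
      · by_cases hw1 : w = 1
        · exact .inl hw1
        · have hw : orderOf w = orderOf x := ((Nat.dvd_prime hx).1
            (orderOf_dvd_of_mem_zpowers h)).resolve_left (mt orderOf_eq_one_iff.1 hw1)
          exact .inr ⟨mem_zpowers_of_orderOf_dvd (mem_zpowers x) h hw.symm.dvd, hne.symm⟩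
    · rintro (rfl | ⟨h, hne⟩)
      exacts [⟨hx1, .inr (one_mem _)⟩, ⟨Ne.symm hne, .inl h⟩]
  have h1 : (1 : G) ∉ {w | x ∈ zpowers w} \ {x} := fun h => hx1 (by simpa using h.1)
  have hpos : 0 < {w | x ∈ zpowers w}.ncard :=
    (Set.ncard_pos (Set.toFinite _)).2 ⟨x, mem_zpowers x⟩
  rw [gDegree, hN, Set.ncard_insert_of_notMem h1,
    Set.ncard_sdiff_singleton_of_mem (s := {w | x ∈ zpowers w}) (mem_zpowers x)]
  omega

/-- The elements of a cyclic group `⟨g⟩` that have the subgroup `⟨x⟩` of prime order `p` among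
their powers are those outside the Hall `p'`-subgroup `⟨g ^ ordProj[p] (orderOf g)⟩`. -/
lemma ncard_setOf_mem_zpowers_inter_zpowers {g x : G} {p : ℕ} (hp : p.Prime)
    (hx : orderOf x = p) (hxg : x ∈ zpowers g) :
    ({w | x ∈ zpowers w} ∩ zpowers g).ncard = orderOf g - ordCompl[p] (orderOf g) := by
  set n := orderOf g
  have hn : n ≠ 0 := (orderOf_pos g).ne'
  set y := g ^ ordProj[p] n
  have hy : orderOf y = ordCompl[p] n :=
    orderOf_pow_of_dvd (pow_ne_zero _ hp.ne_zero) (Nat.ordProj_dvd n p)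
  have hyg : zpowers y ≤ zpowers g := zpowers_le.2 (npow_mem_zpowers g _)
  have key : ∀ w ∈ zpowers g, x ∈ zpowers w ↔ w ∉ zpowers y := by
    intro w hw
    have hwn : orderOf w ∣ n := orderOf_dvd_of_mem_zpowers hw
    calc x ∈ zpowers w ↔ p ∣ orderOf w :=
          ⟨fun h => hx ▸ orderOf_dvd_of_mem_zpowers h,
            fun h => mem_zpowers_of_orderOf_dvd hxg hw (hx ▸ h)⟩
      _ ↔ ¬ orderOf w ∣ ordCompl[p] n := by
          refine ⟨fun hpw hw' => Nat.not_dvd_ordCompl hp hn (hpw.trans hw'), fun hw' => ?_⟩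
          by_contra hpw
          have hcop : (orderOf w).Coprime (ordProj[p] n) :=
            Nat.Coprime.pow_right _ ((Nat.Prime.coprime_iff_not_dvd hp).2 hpw).symm
          exact hw' (hcop.dvd_of_dvd_mul_left ((Nat.ordProj_mul_ordCompl_eq_self n p).symm ▸ hwn))
      _ ↔ w ∉ zpowers y :=
          not_congr ⟨fun h' => mem_zpowers_of_orderOf_dvd hw (hyg (mem_zpowers y)) (hy ▸ h'),
            fun h' => hy ▸ orderOf_dvd_of_mem_zpowers h'⟩
  have hset : {w | x ∈ zpowers w} ∩ zpowers g = (zpowers g : Set G) \ zpowers y := by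
    ext w
    simp only [Set.mem_inter_iff, Set.mem_ofPred_eq, SetLike.mem_coe, Set.mem_sdiff]
    exact ⟨fun ⟨h1, h2⟩ => ⟨h2, (key w h2).1 h1⟩, fun ⟨h1, h2⟩ => ⟨(key w h1).2 h2, h1⟩⟩
  rw [hset, Set.ncard_sdiff hyg, ncard_zpowers, ncard_zpowers, hy]

end PowerGraph

lemma two_mul_ordCompl_add_le {p m c : ℕ} (hp : p.Prime) (hp3 : 3 ≤ p) (hpm : p ∣ m)
    (hm : m ≠ 0) (hcm : c ∣ m) (hc : c ≠ m) :
    2 * ordCompl[p] m + c ≤ m + ordCompl[p] c := by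
  have hc0 : c ≠ 0 := fun h => hm (Nat.eq_zero_of_zero_dvd (h ▸ hcm))
  set a := m.factorization p
  set b := c.factorization p
  set r := ordCompl[p] m
  set s := ordCompl[p] c
  have hmr : p ^ a * r = m := Nat.ordProj_mul_ordCompl_eq_self m p
  have hcs : p ^ b * s = c := Nat.ordProj_mul_ordCompl_eq_self c p
  have hsr : s ∣ r := Nat.ordCompl_dvd_ordCompl_of_dvd hcm p
  have hba : b ≤ a := (Nat.factorization_le_iff_dvd hc0 hm).2 hcm p
  have ha : 1 ≤ a := hp.factorization_pos_of_dvd hm hpm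
  have hr : 0 < r := Nat.pos_of_ne_zero fun h => hm (by rw [← hmr, h, mul_zero])
  have hpa : 3 ≤ p ^ a := hp3.trans (Nat.le_self_pow (by omega) p)
  clear_value a b r s
  subst hmr hcs
  rcases hba.lt_or_eq with hba | hba
  · have hpb : p ^ b * p ≤ p ^ a := by
      rw [← pow_succ]; exact Nat.pow_le_pow_right hp.pos hba
    have hsr' : s ≤ r := Nat.le_of_dvd hr hsr
    have hQ : 1 ≤ p ^ b := Nat.one_le_pow _ _ hp.pos
    nlinarith [Nat.mul_le_mul_right r hpb, Nat.mul_le_mul_left (p ^ b) hsr',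
      Nat.mul_le_mul_left (p ^ b * r) hp3, Nat.mul_le_mul_right r hQ]
  · have h2s : 2 * s ≤ r := by
      obtain ⟨t, rfl⟩ := hsr
      have ht : t ≠ 1 := fun ht => hc (by rw [ht, mul_one, hba])
      have ht0 : t ≠ 0 := by rintro rfl; simp at hr
      nlinarith [show 2 ≤ t by omega]
    subst hba
    nlinarith

section EqualDegrees

variable {G : Type*} [Group G] [Finite G] {k : ℕ}

lemma ncard_setOf_mem_zpowers_of_gDegree_eq
    (hdeg : ∀ x : G, x ≠ 1 → gDegree (powerGraph G) x = k) {x : G} (hx : (orderOf x).Prime) :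
    {w | x ∈ zpowers w}.ncard = k := by
  rw [← gDegree_eq_ncard_of_orderOf_prime hx,
    hdeg x fun h => hx.one_lt.ne' (by rw [h, orderOf_one])]

variable [Nontrivial G]

lemma orderOf_eq_of_isMaxCyclicGen_of_gDegree_eq
    (hdeg : ∀ x : G, x ≠ 1 → gDegree (powerGraph G) x = k) {z : G} (hz : IsMaxCyclicGen z) :
    orderOf z = k + 1 := by
  have hz1 : z ≠ 1 := by
    rintro rfl
    obtain ⟨x, hx⟩ := exists_ne (1 : G)
    have hx' := hz x (by simp)
    exact hx (by simpa [← hx'] using mem_zpowers x)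
  have := hdeg z hz1 ▸ gDegree_of_isMaxCyclicGen hz
  have := orderOf_pos z
  omega

lemma orderOf_dvd_of_gDegree_eq (hdeg : ∀ x : G, x ≠ 1 → gDegree (powerGraph G) x = k) (x : G) :
    orderOf x ∣ k + 1 := by
  obtain ⟨z, hxz, hz⟩ := exists_isMaxCyclicGen x
  exact orderOf_eq_of_isMaxCyclicGen_of_gDegree_eq hdeg hz ▸ orderOf_dvd_of_mem_zpowers hxz

/-- When `k + 1` is a prime power, a maximal cyclic subgroup through `x ≠ 1` lies in the closed
neighbourhood of `x`, which has only `k + 1` elements; so it is that neighbourhood. -/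
lemma zpowers_eq_of_gDegree_eq_of_eq_prime_pow
    (hdeg : ∀ x : G, x ≠ 1 → gDegree (powerGraph G) x = k) {p a : ℕ} (hp : p.Prime)
    (hk : k + 1 = p ^ a) {x z z' : G} (hx : x ≠ 1) (hz : IsMaxCyclicGen z)
    (hz' : IsMaxCyclicGen z') (hxz : x ∈ zpowers z) (hxz' : x ∈ zpowers z') :
    zpowers z' = zpowers z := by
  have adj : ∀ {g w : G}, IsMaxCyclicGen g → x ∈ zpowers g → w ∈ zpowers g → w ≠ x →
      (powerGraph G).Adj x w := fun hg hxg hwg hwx =>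
    powerGraph_adj_iff.2 ⟨hwx.symm, mem_zpowers_or_mem_zpowers_of_orderOf_eq_prime_pow hp
      ((orderOf_eq_of_isMaxCyclicGen_of_gDegree_eq hdeg hg).trans hk) hxg hwg⟩
  have hN : (zpowers z : Set G) \ {x} = (powerGraph G).neighborSet x := by
    refine Set.eq_of_subset_of_ncard_le (fun w hw => adj hz hxz hw.1 hw.2) ?_ (Set.toFinite _)
    rw [← gDegree, hdeg x hx, Set.ncard_sdiff_singleton_of_mem (SetLike.mem_coe.2 hxz),
      ncard_zpowers, orderOf_eq_of_isMaxCyclicGen_of_gDegree_eq hdeg hz]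
    omega
  refine hz' z fun w hw => ?_
  by_cases hwx : w = x
  · exact hwx ▸ hxz
  · exact (hN ▸ adj hz' hxz' hw hwx : w ∈ (zpowers z : Set G) \ {x}).1

/-- In a `p`-group of exponent `p ^ a`, `a ≥ 2`, a central `z` of order `p` does not change the
`p ^ (a - 1)`-th power of `w`, so `w` and `w z` lie in one maximal cyclic subgroup, and then so
does `z`. -/
lemma le_one_of_gDegree_eq_of_eq_prime_pow
    (hdeg : ∀ x : G, x ≠ 1 → gDegree (powerGraph G) x = k) (hne : powerGraph G ≠ ⊤) {p a : ℕ}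
    (hp : p.Prime) (hk : k + 1 = p ^ a) : a ≤ 1 := by
  have : Fact p.Prime := ⟨hp⟩
  by_contra! ha
  have horder : ∀ g : G, IsMaxCyclicGen g → orderOf g = p ^ a := fun g hg =>
    (orderOf_eq_of_isMaxCyclicGen_of_gDegree_eq hdeg hg).trans hk
  have unique : ∀ {x g g' : G}, x ≠ 1 → IsMaxCyclicGen g → IsMaxCyclicGen g' → x ∈ zpowers g →
      x ∈ zpowers g' → zpowers g' = zpowers g :=
    fun hx hg hg' => zpowers_eq_of_gDegree_eq_of_eq_prime_pow hdeg hp hk hx hg hg'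
  have hG : IsPGroup p G := fun g =>
    ⟨a, orderOf_dvd_iff_pow_eq_one.1 (hk ▸ orderOf_dvd_of_gDegree_eq hdeg g)⟩
  obtain ⟨z, hzc, hzp⟩ := hG.exists_mem_center_orderOf_eq
  have hz1 : z ≠ 1 := fun h => hp.one_lt.ne' (by rw [← hzp, h, orderOf_one])
  obtain ⟨gz, hzgz, hgz⟩ := exists_isMaxCyclicGen z
  obtain ⟨v, hv⟩ : ∃ v, v ∉ zpowers gz := by
    by_contra! h
    exact hne (powerGraph_eq_top_of_orderOf_eq_prime_pow hp h (horder gz hgz))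
  obtain ⟨w, hvw, hw⟩ := exists_isMaxCyclicGen v
  have hzw : z ∉ zpowers w := fun h => hv (unique hz1 hgz hw hzgz h ▸ hvw)
  set y := w ^ p ^ (a - 1)
  have hy1 : y ≠ 1 := pow_ne_one_of_lt_orderOf (pow_ne_zero _ hp.ne_zero)
    (horder w hw ▸ Nat.pow_lt_pow_right hp.one_lt (by omega))
  have hwzy : (w * z) ^ p ^ (a - 1) = y := by
    have hz : z ^ p ^ (a - 1) = 1 :=
      orderOf_dvd_iff_pow_eq_one.1 (by rw [hzp]; exact dvd_pow_self p (by omega))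
    rw [(show Commute w z from Subgroup.mem_center_iff.1 hzc w).mul_pow, hz, mul_one]
  obtain ⟨gu, hugu, hgu⟩ := exists_isMaxCyclicGen (w * z)
  have hyu : y ∈ zpowers gu := hwzy ▸ pow_mem hugu _
  have hguw := unique hy1 hw hgu (pow_mem (mem_zpowers w) _) hyu
  have hwz : w * z ∈ zpowers w := hguw ▸ hugu
  exact hzw (by simpa using mul_mem (inv_mem (mem_zpowers w)) hwz)

lemma exists_isMaxCyclicGen_ne_of_gDegree_eq
    (hdeg : ∀ x : G, x ≠ 1 → gDegree (powerGraph G) x = k) {q : ℕ} (hq : q.Prime)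
    (hr : ordCompl[q] (k + 1) ≠ 1) {x z : G} (hx : orderOf x = q) (hz : IsMaxCyclicGen z)
    (hxz : x ∈ zpowers z) :
    ∃ z', IsMaxCyclicGen z' ∧ x ∈ zpowers z' ∧ zpowers z' ≠ zpowers z := by
  obtain ⟨w, hxw, hwz⟩ : ∃ w, x ∈ zpowers w ∧ w ∉ zpowers z := by
    by_contra! h
    have hcount := ncard_setOf_mem_zpowers_inter_zpowers hq hx hxz
    rw [(Set.inter_eq_left (s := {w | x ∈ zpowers w})).2 h,
      ncard_setOf_mem_zpowers_of_gDegree_eq hdeg (hx ▸ hq),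
      orderOf_eq_of_isMaxCyclicGen_of_gDegree_eq hdeg hz] at hcount
    have := Nat.div_le_self (k + 1) (ordProj[q] (k + 1))
    have := (Nat.ordCompl_pos q (Nat.succ_ne_zero k)).ne'
    generalize ordCompl[q] (k + 1) = r at *
    omega
  obtain ⟨z', hwz', hz'⟩ := exists_isMaxCyclicGen w
  exact ⟨z', hz', zpowers_le.2 hwz' hxw, fun h => hwz (h ▸ hwz')⟩

/-- For `x` of odd prime order `q ∣ k + 1`, the set `U` of elements having `x` as a power has
`k` elements. If `k + 1` is not a power of `q`, a single maximal cyclic subgroup meets `U` in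
fewer elements, and two of them already cover more than `k`. -/
lemma ordCompl_eq_one_of_gDegree_eq
    (hdeg : ∀ x : G, x ≠ 1 → gDegree (powerGraph G) x = k) {q : ℕ} (hq : q.Prime) (hq3 : 3 ≤ q)
    (hqk : q ∣ k + 1) : ordCompl[q] (k + 1) = 1 := by
  by_contra hr
  have horder : ∀ g : G, IsMaxCyclicGen g → orderOf g = k + 1 :=
    fun g hg => orderOf_eq_of_isMaxCyclicGen_of_gDegree_eq hdeg hg
  obtain ⟨z, -, hz⟩ := exists_isMaxCyclicGen (1 : G)
  set x := z ^ ((k + 1) / q)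
  have hx : orderOf x = q := by
    rw [show x = z ^ (orderOf z / q) by rw [horder z hz]]
    exact orderOf_pow_orderOf_div (orderOf_pos z).ne' (horder z hz ▸ hqk)
  have hxz : x ∈ zpowers z := npow_mem_zpowers z _
  obtain ⟨z', hz', hxz', hzz'⟩ := exists_isMaxCyclicGen_ne_of_gDegree_eq hdeg hq hr hx hz hxz
  obtain ⟨n, hC⟩ := (Subgroup.le_zpowers_iff z (zpowers z ⊓ zpowers z')).1 inf_le_left
  set y := z ^ n
  have hxy : x ∈ zpowers y := hC ▸ Subgroup.mem_inf.2 ⟨hxz, hxz'⟩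
  have hyz : zpowers y ≤ zpowers z := zpowers_le.2 (npow_mem_zpowers z n)
  have hyk : orderOf y ≠ k + 1 := fun hy => hzz' (hz z' (le_of_eq_of_le
    (eq_of_le_of_card_ge hyz (by rw [Nat.card_zpowers, Nat.card_zpowers, hy, horder z hz])).symm
    (hC ▸ inf_le_right))).symm
  set U := {w : G | x ∈ zpowers w}
  have hinter : (U ∩ zpowers z) ∩ (U ∩ zpowers z') = U ∩ zpowers y := by
    rw [← hC]
    ext w
    simp only [Set.mem_inter_iff, SetLike.mem_coe, Subgroup.mem_inf]
    tauto
  have hunion : ((U ∩ zpowers z) ∪ (U ∩ zpowers z')).ncard ≤ k :=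
    ncard_setOf_mem_zpowers_of_gDegree_eq hdeg (hx ▸ hq) ▸
      Set.ncard_le_ncard (Set.union_subset Set.inter_subset_left Set.inter_subset_left)
  have hcount := Set.ncard_union_add_ncard_inter (U ∩ zpowers z) (U ∩ zpowers z')
  rw [hinter, ncard_setOf_mem_zpowers_inter_zpowers hq hx hxz,
    ncard_setOf_mem_zpowers_inter_zpowers hq hx hxz',
    ncard_setOf_mem_zpowers_inter_zpowers hq hx hxy, horder z hz, horder z' hz'] at hcount
  have := two_mul_ordCompl_add_le hq hq3 hqk (Nat.succ_ne_zero k)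
    (horder z hz ▸ orderOf_dvd_of_mem_zpowers (npow_mem_zpowers z n)) hyk
  have := Nat.div_le_self (k + 1) (ordProj[q] (k + 1))
  have := Nat.div_le_self (orderOf y) (ordProj[q] (orderOf y))
  generalize ordCompl[q] (k + 1) = r at *
  generalize ordCompl[q] (orderOf y) = s at *
  omega

lemma prime_of_gDegree_eq (hdeg : ∀ x : G, x ≠ 1 → gDegree (powerGraph G) x = k)
    (hne : powerGraph G ≠ ⊤) : (k + 1).Prime := by
  obtain ⟨p, a, hp, hpa⟩ : ∃ p a, p.Prime ∧ k + 1 = p ^ a := by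
    by_cases h : ∀ q, q.Prime → q ∣ k + 1 → q = 2
    · exact ⟨2, _, Nat.prime_two,
        Nat.eq_prime_pow_of_unique_prime_dvd (Nat.succ_ne_zero k) fun hd hdk => h _ hd hdk⟩
    · obtain ⟨q, hq, hqk, hq2⟩ : ∃ q, q.Prime ∧ q ∣ k + 1 ∧ q ≠ 2 := by simpa using h
      have hq3 : 3 ≤ q := by have := hq.two_le; omega
      refine ⟨q, (k + 1).factorization q, hq, ?_⟩
      have := Nat.ordProj_mul_ordCompl_eq_self (k + 1) q
      rwa [ordCompl_eq_one_of_gDegree_eq hdeg hq hq3 hqk, mul_one, eq_comm] at this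
  obtain ⟨x, hx⟩ := exists_ne (1 : G)
  have hk : 0 < k :=
    hdeg x hx ▸ (Set.ncard_pos (Set.toFinite _)).2 ⟨1, (powerGraph_adj_one hx).symm⟩
  have ha := le_one_of_gDegree_eq_of_eq_prime_pow hdeg hne hp hpa
  interval_cases a
  · simp at hpa; omega
  · rwa [hpa, pow_one]

lemma exponent_eq_of_gDegree_eq (hdeg : ∀ x : G, x ≠ 1 → gDegree (powerGraph G) x = k)
    (hk : (k + 1).Prime) : Monoid.exponent G = k + 1 :=
  (Monoid.exponent_eq_prime_iff hk).2 fun g hg => ((Nat.dvd_prime hk).1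
    (orderOf_dvd_of_gDegree_eq hdeg g)).resolve_left (mt orderOf_eq_one_iff.1 hg)

end EqualDegrees

section PrimeExponent

variable {G : Type*} [Group G] {p : ℕ}

lemma nontrivial_of_exponent_eq_prime (hp : p.Prime) (hexp : Monoid.exponent G = p) :
    Nontrivial G :=
  not_subsingleton_iff_nontrivial.1 fun h => hp.one_lt.ne' (hexp ▸ Monoid.exp_eq_one_iff.2 h)

variable [Finite G]

lemma isMaxCyclicGen_of_exponent_eq_prime (hp : p.Prime) (hexp : Monoid.exponent G = p)
    {x : G} (hx : x ≠ 1) : IsMaxCyclicGen x := by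
  have := nontrivial_of_exponent_eq_prime hp hexp
  have hord := (Monoid.exponent_eq_prime_iff hp).1 hexp
  refine fun z hxz => eq_of_le_of_card_ge hxz ?_
  have hz : z ≠ 1 := by
    rintro rfl
    exact hx (by simpa using hxz (mem_zpowers x))
  rw [Nat.card_zpowers, Nat.card_zpowers, hord x hx, hord z hz]

lemma powerGraph_eq_top_iff_isCyclic (hp : p.Prime) (hexp : Monoid.exponent G = p) :
    powerGraph G = ⊤ ↔ IsCyclic G := by
  have := nontrivial_of_exponent_eq_prime hp hexp
  constructor
  · intro htop
    obtain ⟨x, hx⟩ := exists_ne (1 : G)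
    refine isCyclic_iff_exists_zpowers_eq_top.2 ⟨x, eq_top_iff.2 fun y _ => ?_⟩
    by_cases hyx : y = x
    · exact hyx ▸ mem_zpowers x
    have hxy : (powerGraph G).Adj x y := by rw [htop]; exact Ne.symm hyx
    obtain ⟨-, h | h⟩ := powerGraph_adj_iff.1 hxy
    · exact isMaxCyclicGen_of_exponent_eq_prime hp hexp hx y (zpowers_le.2 h) ▸ mem_zpowers y
    · exact h
  · intro hcyc
    obtain ⟨g, hg⟩ := hcyc.exists_generator
    have hg1 : g ≠ 1 := by
      obtain ⟨x, hx⟩ := exists_ne (1 : G)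
      rintro rfl
      exact hx (by simpa using hg x)
    exact powerGraph_eq_top_of_orderOf_eq_prime_pow hp hg
      (((Monoid.exponent_eq_prime_iff hp).1 hexp g hg1).trans (pow_one p).symm)

lemma minimallyEdgeConnected_powerGraph_of_exponent_eq_prime (hp : p.Prime)
    (hexp : Monoid.exponent G = p) : MinimallyEdgeConnected (powerGraph G) := by
  have := nontrivial_of_exponent_eq_prime hp hexp
  have hdeg : ∀ x : G, x ≠ 1 → gDegree (powerGraph G) x = p - 1 := fun x hx => by
    rw [gDegree_of_isMaxCyclicGen (isMaxCyclicGen_of_exponent_eq_prime hp hexp hx),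
      (Monoid.exponent_eq_prime_iff hp).1 hexp x hx]
  have hadj : ∀ w : G, w ≠ 1 → (powerGraph G).Adj 1 w := fun w => powerGraph_adj_one
  obtain ⟨x, hx⟩ := exists_ne (1 : G)
  have hκ : edgeConn (powerGraph G) = p - 1 :=
    le_antisymm (hdeg x hx ▸ edgeConn_le_gDegree _ x)
      (le_edgeConn_of_forall_le_gDegree hadj fun v hv => (hdeg v hv).ge)
  refine ⟨this, connected_of_forall_adj hadj, fun e he => ?_⟩
  induction e using Sym2.ind with
  | h a b =>
    wlog hb : b ≠ 1 generalizing a b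
    · rw [Sym2.eq_swap] at he ⊢
      refine this b a he ?_
      rintro rfl
      exact hb ((SimpleGraph.mem_edgeSet _).1 he).ne
    have hup := edgeConn_le_gDegree ((powerGraph G).deleteEdges {s(b, a)}) b
    rw [gDegree_deleteEdges_of_adj ((SimpleGraph.mem_edgeSet _).1 he).symm, hdeg b hb,
      Sym2.eq_swap] at hup
    have := edgeConn_le_edgeConn_deleteEdges_add_one he
    omega

end PrimeExponent

/-- A finite group `G` is a non-cyclic group of prime exponent if and only if its
power graph is non-complete and minimally edge-connected. -/
theorem stmt_0 (G : Type*) [Group G] [Fintype G] :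
    (¬ IsCyclic G ∧ ∃ p : ℕ, p.Prime ∧ Monoid.exponent G = p) ↔
      (powerGraph G ≠ ⊤ ∧ MinimallyEdgeConnected (powerGraph G)) := by
  constructor
  · rintro ⟨hcyc, p, hp, hexp⟩
    exact ⟨mt (powerGraph_eq_top_iff_isCyclic hp hexp).1 hcyc,
      minimallyEdgeConnected_powerGraph_of_exponent_eq_prime hp hexp⟩
  · rintro ⟨hne, hmec⟩
    have : Nontrivial G := hmec.1
    have hdeg : ∀ x : G, x ≠ 1 → gDegree (powerGraph G) x = edgeConn (powerGraph G) :=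
      fun x => gDegree_eq_edgeConn_of_minimallyEdgeConnected hmec fun w => powerGraph_adj_one
    have hp := prime_of_gDegree_eq hdeg hne
    have hexp := exponent_eq_of_gDegree_eq hdeg hp
    exact ⟨mt (powerGraph_eq_top_iff_isCyclic hp hexp).2 hne, _, hp, hexp⟩
end

section
/- Let Γ be a graph with an edge ε such that Γ−ε is connected. If κ(Γ−ε) = κ(Γ)−1, then no minimum separating set of Γ−ε contains an endpoint of ε. -/
open Subgroup

/-!
Once an endpoint of `ε` lies in `S`, deleting `S` also deletes `ε`, so `S` separates `Γ` as well.
Hence `κ(Γ) ≤ |S| = κ(Γ − ε) = κ(Γ) − 1`, impossible as `S` is nonempty.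
-/

namespace SimpleGraph

variable {V : Type*}

lemma induce_compl_deleteEdges_singleton (Γ : SimpleGraph V) {e : Sym2 V} {S : Set V} {x : V}
    (hxe : x ∈ e) (hxS : x ∈ S) : (Γ.deleteEdges {e}).induce Sᶜ = Γ.induce Sᶜ := by
  ext ⟨a, ha⟩ ⟨b, hb⟩
  simp only [comap_adj, deleteEdges_adj, Set.mem_singleton_iff, Function.Embedding.coe_subtype,
    and_iff_left_iff_imp]
  rintro - rfl
  rcases Sym2.mem_iff.mp hxe with rfl | rfl
  exacts [ha hxS, hb hxS]

end SimpleGraph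

section

variable {V : Type*}

lemma IsSeparatingSet.compl_nontrivial {Γ : SimpleGraph V} {S : Set V}
    (hS : IsSeparatingSet Γ S) : Sᶜ.Nontrivial := by
  refine Set.not_subsingleton_iff.mp fun h => hS ?_
  have := h.coe_sort
  exact SimpleGraph.Preconnected.of_subsingleton

variable [Finite V]

lemma IsSeparatingSet.vertConn_le {Γ : SimpleGraph V} {S : Set V} (hS : IsSeparatingSet Γ S) :
    vertConn Γ ≤ S.ncard :=
  Nat.sInf_le ⟨S, S.toFinite, rfl, Or.inl hS⟩

lemma exists_ncard_eq_vertConn (Γ : SimpleGraph V) :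
    ∃ T : Set V, T.ncard = vertConn Γ ∧ (IsSeparatingSet Γ T ∨ Tᶜ.Subsingleton) := by
  obtain ⟨T, -, hT, hsep⟩ := Nat.sInf_mem (s := {k | ∃ S : Set V, S.Finite ∧ S.ncard = k ∧
      (¬ (Γ.induce Sᶜ).Preconnected ∨ Sᶜ.Subsingleton)})
    ⟨_, Set.univ, Set.toFinite _, rfl, Or.inr (by simp)⟩
  exact ⟨T, hT, hsep⟩

lemma IsMinSeparatingSet.ncard_eq_vertConn {Γ : SimpleGraph V} {S : Set V}
    (hS : IsMinSeparatingSet Γ S) : S.ncard = vertConn Γ := by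
  obtain ⟨hsep, hmin⟩ := hS
  refine le_antisymm ?_ hsep.vertConn_le
  obtain ⟨T, hT, hTsep | hTsub⟩ := exists_ncard_eq_vertConn Γ
  · exact hT ▸ hmin T hTsep
  · -- `S` leaves at least two vertices and `T` at most one, so `S` is the smaller set.
    have hSc : 1 < Sᶜ.ncard := Set.one_lt_ncard_iff_nontrivial.mpr hsep.compl_nontrivial
    have hTc : Tᶜ.ncard ≤ 1 := Set.ncard_le_one_iff_subsingleton.mpr hTsub
    have hS_add := S.ncard_add_ncard_compl
    have hT_add := T.ncard_add_ncard_compl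
    omega

end

theorem stmt_5_general {V : Type*} [Fintype V] (Γ : SimpleGraph V) {u v : V}
    (hk : vertConn (Γ.deleteEdges {s(u, v)}) = vertConn Γ - 1) :
    ∀ S : Set V, IsMinSeparatingSet (Γ.deleteEdges {s(u, v)}) S → u ∉ S ∧ v ∉ S := by
  intro S hS
  suffices h : ∀ x ∈ s(u, v), x ∉ S from
    ⟨h u (Sym2.mem_mk_left u v), h v (Sym2.mem_mk_right u v)⟩
  intro x hxe hxS
  have hsep : IsSeparatingSet Γ S := by
    simpa only [IsSeparatingSet, Γ.induce_compl_deleteEdges_singleton hxe hxS] using hS.1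
  have hpos : 0 < S.ncard := (Set.ncard_pos S.toFinite).mpr ⟨x, hxS⟩
  have hS_eq := hS.ncard_eq_vertConn
  have hΓ_le := hsep.vertConn_le
  omega

/-- If `Γ − ε` is connected and `κ(Γ − ε) = κ(Γ) − 1`, then no minimum separating
set of `Γ − ε` contains an endpoint of `ε`. -/
theorem stmt_5 {V : Type*} [Fintype V] (Γ : SimpleGraph V) {u v : V} (huv : Γ.Adj u v)
    (hconn : (Γ.deleteEdges {s(u, v)}).Connected)
    (hk : vertConn (Γ.deleteEdges {s(u, v)}) = vertConn Γ - 1) :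
    ∀ S : Set V, IsMinSeparatingSet (Γ.deleteEdges {s(u, v)}) S → u ∉ S ∧ v ∉ S :=
  stmt_5_general Γ hk
end

section
/- For a finite group G, the power graph 𝒢(G) is a complete graph if and only if G is a cyclic group whose order is 1 or a prime power. -/
/-!
In a finite group `u` is a positive power of `v` exactly when `⟨u⟩ ≤ ⟨v⟩`, so the power graph
is complete iff the cyclic subgroups form a chain. In a chain, the subgroup generated by an
element of maximal order contains all the others, so `G` is cyclic; and elements of two distinct
prime orders (Cauchy) would generate incomparable subgroups. Conversely, in a cyclic group
`⟨u⟩ ≤ ⟨v⟩` as soon as `orderOf u ∣ orderOf v`, and divisors of a prime power form a chain.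
-/

open Subgroup

theorem Nat.dvd_or_dvd_of_dvd_prime_pow {p k a b : ℕ} (hp : p.Prime) (ha : a ∣ p ^ k)
    (hb : b ∣ p ^ k) : a ∣ b ∨ b ∣ a := by
  obtain ⟨i, -, rfl⟩ := (Nat.dvd_prime_pow hp).mp ha
  obtain ⟨j, -, rfl⟩ := (Nat.dvd_prime_pow hp).mp hb
  exact (le_total i j).imp (Nat.pow_dvd_pow p) (Nat.pow_dvd_pow p)

theorem Nat.eq_one_or_isPrimePow_of_prime_dvd_unique {n : ℕ}
    (h : ∀ p q : ℕ, p.Prime → q.Prime → p ∣ n → q ∣ n → p = q) : n = 1 ∨ IsPrimePow n := by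
  refine or_iff_not_imp_left.mpr fun hn1 => isPrimePow_iff_unique_prime_dvd.mpr ?_
  exact ⟨n.minFac, ⟨Nat.minFac_prime hn1, n.minFac_dvd⟩,
    fun q ⟨hq, hqn⟩ => h q _ hq (Nat.minFac_prime hn1) hqn n.minFac_dvd⟩

section PowerGraph

variable {G : Type*} [Group G]

theorem IsOfFinOrder.exists_pos_pow_eq_iff_mem_zpowers {u v : G} (hv : IsOfFinOrder v) :
    (∃ n : ℕ, 0 < n ∧ u = v ^ n) ↔ u ∈ zpowers v := by
  refine ⟨fun ⟨n, _, hn⟩ => hn ▸ npow_mem_zpowers v n, fun h => ?_⟩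
  obtain ⟨k, rfl⟩ := hv.mem_powers_iff_mem_zpowers.mpr h
  exact ⟨k + orderOf v, by have := hv.orderOf_pos; omega, by
    rw [pow_add, pow_orderOf_eq_one, mul_one]⟩

theorem powerGraph_adj_iff_s6 [Finite G] {u v : G} :
    (powerGraph G).Adj u v ↔ u ≠ v ∧ (zpowers v ≤ zpowers u ∨ zpowers u ≤ zpowers v) := by
  simp only [powerGraph, (isOfFinOrder_of_finite u).exists_pos_pow_eq_iff_mem_zpowers,
    (isOfFinOrder_of_finite v).exists_pos_pow_eq_iff_mem_zpowers, zpowers_le]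

theorem powerGraph_eq_top_iff [Finite G] :
    powerGraph G = ⊤ ↔ ∀ u v : G, zpowers u ≤ zpowers v ∨ zpowers v ≤ zpowers u := by
  refine ⟨fun h u v => ?_, fun h => ?_⟩
  · rcases eq_or_ne u v with rfl | huv
    · exact Or.inl le_rfl
    · have hadj : (powerGraph G).Adj u v := h ▸ huv
      exact (powerGraph_adj_iff_s6.mp hadj).2.symm
  · ext u v
    simp only [powerGraph_adj_iff_s6, SimpleGraph.top_adj, and_iff_left_iff_imp]
    exact fun _ => h v u

theorem IsCyclic.mem_zpowers_of_orderOf_dvd [Finite G] [IsCyclic G] {u v : G}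
    (h : orderOf u ∣ orderOf v) : u ∈ zpowers v := by
  classical
  have := Fintype.ofFinite G
  -- In a cyclic group `x ^ n = 1` has at most `n` solutions, and `zpowers v` already supplies
  -- `orderOf v` of them.
  let roots : Finset G := {x | x ^ orderOf v = 1}
  have hsub : (zpowers v : Set G).toFinset ⊆ roots := fun x hx => by
    simp only [Set.mem_toFinset, SetLike.mem_coe] at hx
    simpa [roots, ← orderOf_dvd_iff_pow_eq_one] using orderOf_dvd_of_mem_zpowers hx
  have hcard : roots.card ≤ (zpowers v : Set G).toFinset.card := by
    rw [← Set.ncard_eq_toFinset_card', ← Nat.card_coe_set_eq, SetLike.coe_sort_coe,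
      Nat.card_zpowers]
    exact IsCyclic.card_pow_eq_one_le (orderOf_pos v)
  have hu : u ∈ roots := by simpa [roots, ← orderOf_dvd_iff_pow_eq_one] using h
  rw [← Finset.eq_of_subset_of_card_le hsub hcard] at hu
  simpa using hu

section ZPowersChain

variable [Finite G] (hchain : ∀ u v : G, zpowers u ≤ zpowers v ∨ zpowers v ≤ zpowers u)
include hchain

theorem isCyclic_of_zpowers_chain : IsCyclic G := by
  obtain ⟨g, hg⟩ := Finite.exists_max (orderOf : G → ℕ)
  refine isCyclic_iff_exists_zpowers_eq_top.mpr ⟨g, eq_top_iff.mpr fun x _ => ?_⟩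
  rcases hchain x g with hle | hle
  · exact hle (mem_zpowers x)
  · rw [eq_of_le_of_card_ge hle (by simpa only [Nat.card_zpowers] using hg x)]
    exact mem_zpowers x

theorem eq_of_prime_dvd_card_of_zpowers_chain {p q : ℕ} (hp : p.Prime) (hq : q.Prime)
    (hpG : p ∣ Nat.card G) (hqG : q ∣ Nat.card G) : p = q := by
  have := Fact.mk hp
  have := Fact.mk hq
  obtain ⟨u, hu⟩ := exists_prime_orderOf_dvd_card' p hpG
  obtain ⟨v, hv⟩ := exists_prime_orderOf_dvd_card' q hqG
  have hdvd : p ∣ q ∨ q ∣ p := by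
    rw [← hu, ← hv]
    simpa only [Nat.card_zpowers] using (hchain u v).imp card_dvd_of_le card_dvd_of_le
  rcases hdvd with hpq | hqp
  · exact (Nat.prime_dvd_prime_iff_eq hp hq).mp hpq
  · exact ((Nat.prime_dvd_prime_iff_eq hq hp).mp hqp).symm

end ZPowersChain

theorem zpowers_chain_iff_isCyclic_and_card_eq_one_or_isPrimePow [Finite G] :
    (∀ u v : G, zpowers u ≤ zpowers v ∨ zpowers v ≤ zpowers u) ↔
      IsCyclic G ∧ (Nat.card G = 1 ∨ IsPrimePow (Nat.card G)) := by
  refine ⟨fun h => ⟨isCyclic_of_zpowers_chain h, Nat.eq_one_or_isPrimePow_of_prime_dvd_unique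
    fun _ _ => eq_of_prime_dvd_card_of_zpowers_chain h⟩, ?_⟩
  rintro ⟨hcyc, hcard⟩ u v
  have hdvd : orderOf u ∣ orderOf v ∨ orderOf v ∣ orderOf u := by
    rcases hcard with h1 | ⟨p, k, hp, -, hpk⟩
    · have hu := orderOf_dvd_natCard u
      rw [h1, Nat.dvd_one] at hu
      exact Or.inl (hu ▸ one_dvd _)
    · exact Nat.dvd_or_dvd_of_dvd_prime_pow hp.nat_prime
        (hpk ▸ orderOf_dvd_natCard u) (hpk ▸ orderOf_dvd_natCard v)
  simpa only [zpowers_le] using hdvd.imp IsCyclic.mem_zpowers_of_orderOf_dvd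
    IsCyclic.mem_zpowers_of_orderOf_dvd

end PowerGraph

/-- The power graph of a finite group is complete iff the group is cyclic of
order one or prime power order. -/
theorem stmt_6 (G : Type*) [Group G] [Fintype G] :
    powerGraph G = ⊤ ↔ IsCyclic G ∧ (Nat.card G = 1 ∨ IsPrimePow (Nat.card G)) := by
  rw [powerGraph_eq_top_iff, zpowers_chain_iff_isCyclic_and_card_eq_one_or_isPrimePow]
end

section
/- Let p be a prime and let G be a finite p-group. If x is an element of order p in G, then x is adjacent in 𝒢*(G) to every other vertex of the connected component of 𝒢*(G) containing x. -/
open Subgroup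

/-!
A cyclic `p`-group has a unique subgroup of order `p`. Hence, for `x` of order `p`, the
property `x ∈ ⟨v⟩` passes along every edge `u — v` of `𝒢*(G)`: if `v` is a power of `u`, then
`⟨v⟩ ≤ ⟨u⟩` is a nontrivial subgroup of the cyclic `p`-group `⟨u⟩`, so it contains that
unique subgroup `⟨x⟩`; if `u` is a power of `v`, then `⟨x⟩ ≤ ⟨u⟩ ≤ ⟨v⟩`. So `x` is a power of
every vertex in its component.
-/

theorem IsCyclic.mem_zpowers_of_orderOf_dvd_s10 {α : Type*} [Group α] [Finite α] [IsCyclic α]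
    {x w : α} (h : orderOf x ∣ orderOf w) : x ∈ zpowers w := by
  classical
  have := Fintype.ofFinite α
  -- `zpowers w` already has `orderOf w` solutions of `a ^ orderOf w = 1`, and a cyclic
  -- group has no more than that.
  set S : Finset α := {a | a ^ orderOf w = 1}
  have hsub : (zpowers w : Set α).toFinset ⊆ S := by
    intro a ha
    obtain ⟨k, rfl⟩ := Set.mem_toFinset.mp ha
    rw [Finset.mem_filter_univ, ← zpow_natCast, ← zpow_mul, mul_comm, zpow_mul, zpow_natCast,
      pow_orderOf_eq_one, one_zpow]
  have hcard : S.card ≤ (zpowers w : Set α).toFinset.card := by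
    rw [Set.toFinset_card, ← Nat.card_eq_fintype_card, SetLike.coe_sort_coe, Nat.card_zpowers]
    exact IsCyclic.card_pow_eq_one_le (orderOf_pos w)
  have hxS : x ∈ S := by simpa [S] using orderOf_dvd_iff_pow_eq_one.mp h
  rw [← Finset.eq_of_subset_of_card_le hsub hcard] at hxS
  exact Set.mem_toFinset.mp hxS

theorem mem_zpowers_of_mem_zpowers_of_orderOf_dvd {G : Type*} [Group G] [Finite G]
    {u x w : G} (hxu : x ∈ zpowers u) (hwu : w ∈ zpowers u) (h : orderOf x ∣ orderOf w) :
    x ∈ zpowers w := by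
  obtain ⟨k, hk⟩ := IsCyclic.mem_zpowers_of_orderOf_dvd_s10 (x := (⟨x, hxu⟩ : zpowers u))
    (w := ⟨w, hwu⟩) (by simpa only [Subgroup.orderOf_mk] using h)
  exact ⟨k, congrArg Subtype.val hk⟩

theorem mem_zpowers_of_powerGraph_adj {G : Type*} [Group G] [Finite G] {p : ℕ} [Fact p.Prime]
    (hG : IsPGroup p G) {x u v : G} (hx : orderOf x = p) (huv : (powerGraph G).Adj u v)
    (hv : v ≠ 1) (hxu : x ∈ zpowers u) : x ∈ zpowers v := by
  rcases huv.2 with ⟨n, -, rfl⟩ | ⟨m, -, rfl⟩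
  · exact mem_zpowers_of_mem_zpowers_of_orderOf_dvd hxu (pow_mem (mem_zpowers u) n)
      (hx ▸ hG.dvd_orderOf hv)
  · exact zpowers_le.mpr (pow_mem (mem_zpowers v) m) hxu

theorem mem_zpowers_of_reachable {G : Type*} [Group G] [Finite G] {p : ℕ} [Fact p.Prime]
    (hG : IsPGroup p G) {x : G} (hx : orderOf x = p) {a b : {g : G | g ≠ 1}}
    (hab : ((powerGraph G).induce {g : G | g ≠ 1}).Reachable a b) (hxa : x ∈ zpowers (a : G)) :
    x ∈ zpowers (b : G) := by
  rw [SimpleGraph.reachable_iff_reflTransGen] at hab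
  induction hab with
  | refl => exact hxa
  | @tail c d _ hcd ih => exact mem_zpowers_of_powerGraph_adj hG hx hcd d.2 ih

theorem powerGraph_adj_of_mem_zpowers {G : Type*} [Group G] [Finite G] {x y : G}
    (hxy : x ≠ y) (hx : x ≠ 1) (h : x ∈ zpowers y) : (powerGraph G).Adj x y := by
  obtain ⟨n, rfl⟩ := mem_powers_iff_mem_zpowers.mpr h
  refine ⟨hxy, Or.inr ⟨n, Nat.pos_of_ne_zero ?_, rfl⟩⟩
  rintro rfl
  exact hx (pow_zero y)

/-- In a finite `p`-group, any element `x` of order `p` is adjacent in `𝒢*(G)` to every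
other vertex of the connected component of `𝒢*(G)` containing `x`. -/
theorem stmt_10 (G : Type*) [Group G] [Fintype G] (p : ℕ) (hp : p.Prime)
    (hG : ∃ k : ℕ, Fintype.card G = p ^ k) (x : G) (hx : orderOf x = p)
    (hx1 : x ≠ 1) :
    ∀ y : ↥{g : G | g ≠ 1},
      ((powerGraph G).induce {g : G | g ≠ 1}).Reachable ⟨x, hx1⟩ y →
        (y : G) ≠ x → ((powerGraph G).induce {g : G | g ≠ 1}).Adj ⟨x, hx1⟩ y := by
  intro y hreach hyx
  have := Fact.mk hp
  obtain ⟨k, hk⟩ := hG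
  have hpG : IsPGroup p G := IsPGroup.of_card (by rw [Nat.card_eq_fintype_card, hk])
  exact powerGraph_adj_of_mem_zpowers (Ne.symm hyx) hx1
    (mem_zpowers_of_reachable hpG hx hreach (mem_zpowers x))
end
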